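/- arXiv:cs/0309014 — 3 statements merged into one kernel-verified Lean document; each statement's English description precedes it below -/
import Mathlib

section
/- Let C₁ and C₂ be cycles with t₁ and t₂ turns respectively, and suppose some pixel p is covered by both C₁ and C₂. Then there exists a single cycle covering exactly the union of the pixel sets covered by C₁ and C₂ that has at most t₁ + t₂ + 2 turns. -/
/-- A pixel is a point of `ℤ × ℤ`. -/
abbrev Pixel : Type := ℤ × ℤ

/-- Two pixels are adjacent if their ℓ¹-distance is 1. -/
def Adjacent (p q : Pixel) : Prop := |p.1 - q.1| + |p.2 - q.2| = 1

/-- A cycle: a cyclic sequence of `k ≥ 2` pixels (encoded as a `k`-periodic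
function on `ℤ`) in which consecutive pixels are adjacent. -/
structure GridCycle where
  k : ℕ
  two_le : 2 ≤ k
  pts : ℤ → Pixel
  periodic : ∀ i : ℤ, pts (i + k) = pts i
  adj : ∀ i : ℤ, Adjacent (pts i) (pts (i + 1))

/-- The set of pixels covered by a cycle. -/
def GridCycle.covers (C : GridCycle) : Set Pixel := Set.range C.pts

/-- Turn cost at position `i`: 0 if the walk goes straight, 2 for a U-turn,
1 for a 90° turn. -/
def GridCycle.turnCost (C : GridCycle) (i : ℤ) : ℕ :=
  if C.pts (i + 1) - C.pts i = C.pts i - C.pts (i - 1) then 0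
  else if C.pts (i + 1) - C.pts i = -(C.pts i - C.pts (i - 1)) then 2
  else 1

/-- The number of turns of a cycle: total turn cost over all positions. -/
def GridCycle.turns (C : GridCycle) : ℕ :=
  ∑ i ∈ Finset.range C.k, C.turnCost (i : ℤ)

/-- A set of pixels is connected under adjacency. -/
def ConnectedIn (P : Set Pixel) : Prop :=
  ∀ p ∈ P, ∀ q ∈ P, Relation.ReflTransGen (fun a b => b ∈ P ∧ Adjacent a b) p q

/-- A region is a finite nonempty set of pixels connected under adjacency. -/
def IsRegion (P : Set Pixel) : Prop := P.Finite ∧ P.Nonempty ∧ ConnectedIn P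

/-- A tour of `P`: a cycle whose pixels lie in `P` covering every pixel of `P`. -/
def IsTour (P : Set Pixel) (C : GridCycle) : Prop := C.covers = P

/-- A cycle cover of `P`: a finite collection of cycles with pixels in `P`
covering every pixel of `P`. -/
def IsCycleCover (P : Set Pixel) (CC : List GridCycle) : Prop :=
  (∀ C ∈ CC, C.covers ⊆ P) ∧ ∀ p ∈ P, ∃ C ∈ CC, p ∈ C.covers

/-- The number of turns of a cycle cover. -/
def coverTurns (CC : List GridCycle) : ℕ := (CC.map GridCycle.turns).sum

/-- A horizontal strip of `P`: a maximal horizontal run of pixels of `P`. -/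
def IsHStrip (P S : Set Pixel) : Prop :=
  ∃ x y : ℤ, ∃ ℓ : ℕ, S = {p : Pixel | p.2 = y ∧ x ≤ p.1 ∧ p.1 ≤ x + (ℓ : ℤ)} ∧
    S ⊆ P ∧ (x - 1, y) ∉ P ∧ (x + (ℓ : ℤ) + 1, y) ∉ P

/-- A vertical strip of `P`: a maximal vertical run of pixels of `P`. -/
def IsVStrip (P S : Set Pixel) : Prop :=
  ∃ x y : ℤ, ∃ ℓ : ℕ, S = {p : Pixel | p.1 = x ∧ y ≤ p.2 ∧ p.2 ≤ y + (ℓ : ℤ)} ∧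
    S ⊆ P ∧ (x, y - 1) ∉ P ∧ (x, y + (ℓ : ℤ) + 1) ∉ P

/-- A strip of `P` is a horizontal or vertical strip. -/
def IsStrip (P S : Set Pixel) : Prop := IsHStrip P S ∨ IsVStrip P S

/-- A strip cover of `P`: a set of strips of `P` whose union is `P`. -/
def IsStripCover (P : Set Pixel) (F : Set (Set Pixel)) : Prop :=
  (∀ S ∈ F, IsStrip P S) ∧ ⋃₀ F = P

/-- The minimum size of a strip cover of `P`. -/
noncomputable def minStripCover (P : Set Pixel) : ℕ :=
  sInf {m | ∃ F, IsStripCover P F ∧ F.ncard = m}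

/-- A rook placement in `P`: a subset of `P` no two distinct elements of which
lie in a common strip of `P`. -/
def IsRookPlacement (P R : Set Pixel) : Prop :=
  R ⊆ P ∧ ∀ p ∈ R, ∀ q ∈ R, p ≠ q → ¬∃ S, IsStrip P S ∧ p ∈ S ∧ q ∈ S

/-- A maximal rook placement: every pixel of `P` lies in a common strip with
some element of `R`. -/
def IsMaximalRookPlacement (P R : Set Pixel) : Prop :=
  IsRookPlacement P R ∧ ∀ p ∈ P, ∃ r ∈ R, ∃ S, IsStrip P S ∧ p ∈ S ∧ r ∈ S

/-!
Rotate both cycles so that they start at `p` and splice them: run once around `C₁`, then once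
around `C₂`. Every position keeps its turn cost except the two visits of `p`, where the incoming
step of one cycle meets the outgoing step of the other. A check of the possible unit steps shows
that this costs at most two extra turns, unless both cycles run straight through `p` in opposite
directions; then splicing in `C₂` backwards costs nothing extra.
-/

open Finset Function

theorem Function.Periodic.sum_range_const_add {M : Type*} [AddCommMonoid M] {f : ℤ → M} {k : ℕ}
    (hf : Periodic f k) (a : ℤ) : ∑ i ∈ range k, f (a + i) = ∑ i ∈ range k, f i := by
  have shift_one (a : ℤ) : ∑ i ∈ range k, f (a + 1 + i) = ∑ i ∈ range k, f (a + i) := by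
    cases k with
    | zero => rfl
    | succ m =>
      rw [sum_range_succ, sum_range_succ', Nat.cast_zero, add_zero]
      congr 1
      · push_cast [add_assoc, add_comm (1 : ℤ)]; rfl
      · simpa [add_assoc, add_comm (1 : ℤ)] using hf a
  induction a using Int.induction_on with
  | zero => simp
  | succ n ih => rw [shift_one, ih]
  | pred n ih => rw [← ih, ← shift_one, sub_add_cancel]

theorem Function.Periodic.sum_range_neg {M : Type*} [AddCommMonoid M] {f : ℤ → M} {k : ℕ}
    (hf : Periodic f k) : ∑ i ∈ range k, f (-i) = ∑ i ∈ range k, f i := by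
  rw [← sum_range_reflect, ← hf.sum_range_const_add 1]
  refine sum_congr rfl fun i hi => ?_
  rw [show (1 : ℤ) + i = -((k - 1 - i : ℕ) : ℤ) + k by have := mem_range.mp hi; omega, hf]

theorem sum_range_add_apply_zero_eq {M : Type*} [AddCommMonoid M] {f g : ℕ → M} {k : ℕ}
    (hk : 0 < k) (hfg : ∀ i, 0 < i → i < k → f i = g i) :
    ∑ i ∈ range k, f i + g 0 = ∑ i ∈ range k, g i + f 0 := by
  obtain ⟨m, rfl⟩ := Nat.exists_eq_add_one_of_ne_zero hk.ne'
  rw [sum_range_succ', sum_range_succ', add_assoc, add_assoc, add_comm (f 0),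
    sum_congr rfl fun i hi => hfg (i + 1) i.succ_pos (by simpa using mem_range.mp hi)]

theorem Adjacent.symm {p q : Pixel} (h : Adjacent p q) : Adjacent q p := by
  rwa [Adjacent, abs_sub_comm, abs_sub_comm q.2]

def unitSteps : Finset Pixel := {(1, 0), (-1, 0), (0, 1), (0, -1)}

theorem Adjacent.sub_mem_unitSteps {p q : Pixel} (h : Adjacent p q) : q - p ∈ unitSteps := by
  obtain ⟨p₁, p₂⟩ := p
  obtain ⟨q₁, q₂⟩ := q
  simp only [Adjacent] at h
  simp only [unitSteps, Prod.mk_sub_mk, mem_insert, mem_singleton, Prod.mk.injEq]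
  rcases abs_cases (p₁ - q₁) with h₁ | h₁ <;> rcases abs_cases (p₂ - q₂) with h₂ | h₂ <;> omega

def turnCostOfSteps (u v : Pixel) : ℕ := if v = u then 0 else if v = -u then 2 else 1

theorem turnCostOfSteps_neg_neg (u v : Pixel) :
    turnCostOfSteps (-v) (-u) = turnCostOfSteps u v := by
  simp only [turnCostOfSteps, neg_inj, neg_neg, eq_comm (a := -u)]

/-- At a common pixel, let `u, v` be the steps of `C₁` into and out of it and `w, x` those of
`C₂`. Splicing `C₂` in forwards trades the turns `(u, v)`, `(w, x)` for `(w, v)`, `(u, x)`,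
splicing it in backwards for `(-x, v)`, `(u, -w)`. -/
theorem splice_turnCost_le :
    ∀ u ∈ unitSteps, ∀ v ∈ unitSteps, ∀ w ∈ unitSteps, ∀ x ∈ unitSteps,
      turnCostOfSteps w v + turnCostOfSteps u x ≤
          turnCostOfSteps u v + turnCostOfSteps w x + 2 ∨
        turnCostOfSteps (-x) v + turnCostOfSteps u (-w) ≤
          turnCostOfSteps u v + turnCostOfSteps w x + 2 := by
  decide

namespace GridCycle

variable (C : GridCycle)

theorem pts_periodic : Periodic C.pts C.k := C.periodic

theorem pts_emod (i : ℤ) : C.pts (i % C.k) = C.pts i := by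
  rw [Int.emod_def, mul_comm]
  exact C.pts_periodic.sub_int_mul_eq _

theorem covers_eq_image_Ico : C.covers = C.pts '' Set.Ico 0 C.k := by
  refine subset_antisymm ?_ (Set.image_subset_range _ _)
  rintro _ ⟨i, rfl⟩
  have hk : (0 : ℤ) < C.k := by have := C.two_le; omega
  exact ⟨i % C.k, ⟨Int.emod_nonneg i hk.ne', Int.emod_lt_of_pos i hk⟩, C.pts_emod i⟩

def inStep (i : ℤ) : Pixel := C.pts i - C.pts (i - 1)

def outStep (i : ℤ) : Pixel := C.pts (i + 1) - C.pts i

theorem turnCost_eq (i : ℤ) : C.turnCost i = turnCostOfSteps (C.inStep i) (C.outStep i) := rfl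

theorem outStep_mem_unitSteps (i : ℤ) : C.outStep i ∈ unitSteps := (C.adj i).sub_mem_unitSteps

theorem inStep_mem_unitSteps (i : ℤ) : C.inStep i ∈ unitSteps := by
  simpa [inStep, outStep] using C.outStep_mem_unitSteps (i - 1)

theorem turnCost_periodic : Periodic C.turnCost C.k := fun i => by
  simp only [turnCost_eq, inStep, outStep]
  rw [add_sub_right_comm, add_right_comm, C.periodic, C.periodic, C.periodic]

theorem turnCost_congr {D : GridCycle} {i j : ℤ} (hprev : C.pts (i - 1) = D.pts (j - 1))
    (hcur : C.pts i = D.pts j) (hnext : C.pts (i + 1) = D.pts (j + 1)) :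
    C.turnCost i = D.turnCost j := by
  simp only [turnCost_eq, inStep, outStep, hprev, hcur, hnext]

def rotate (a : ℤ) : GridCycle where
  k := C.k
  two_le := C.two_le
  pts i := C.pts (a + i)
  periodic i := by rw [← add_assoc, C.periodic]
  adj i := by rw [← add_assoc]; exact C.adj _

@[simp]
theorem rotate_pts (a i : ℤ) : (C.rotate a).pts i = C.pts (a + i) := rfl

@[simp]
theorem covers_rotate (a : ℤ) : (C.rotate a).covers = C.covers := by
  ext x
  constructor
  · rintro ⟨i, rfl⟩
    exact ⟨a + i, rfl⟩
  · rintro ⟨j, rfl⟩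
    exact ⟨j - a, by simp⟩

@[simp]
theorem turns_rotate (a : ℤ) : (C.rotate a).turns = C.turns := by
  have h (i : ℤ) : (C.rotate a).turnCost i = C.turnCost (a + i) :=
    (C.rotate a).turnCost_congr (by rw [rotate_pts, add_sub_assoc]) rfl
      (by rw [rotate_pts, add_assoc])
  simp only [turns, h]
  exact C.turnCost_periodic.sum_range_const_add a

def reverse : GridCycle where
  k := C.k
  two_le := C.two_le
  pts i := C.pts (-i)
  periodic i := by rw [neg_add, ← sub_eq_add_neg, C.pts_periodic.sub_eq]
  adj i := by
    rw [neg_add, ← sub_eq_add_neg]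
    simpa using (C.adj (-i - 1)).symm

@[simp]
theorem reverse_pts (i : ℤ) : C.reverse.pts i = C.pts (-i) := rfl

@[simp]
theorem covers_reverse : C.reverse.covers = C.covers := by
  ext x
  constructor
  · rintro ⟨i, rfl⟩
    exact ⟨-i, rfl⟩
  · rintro ⟨j, rfl⟩
    exact ⟨-j, by simp⟩

theorem reverse_inStep (i : ℤ) : C.reverse.inStep i = -C.outStep (-i) := by
  simp [inStep, outStep, neg_add_eq_sub]

theorem reverse_outStep (i : ℤ) : C.reverse.outStep i = -C.inStep (-i) := by
  simp [inStep, outStep, neg_add_eq_sub]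

theorem reverse_turnCost (i : ℤ) : C.reverse.turnCost i = C.turnCost (-i) := by
  rw [turnCost_eq, turnCost_eq, reverse_inStep, reverse_outStep, turnCostOfSteps_neg_neg]

@[simp]
theorem turns_reverse : C.reverse.turns = C.turns := by
  simp only [turns, reverse_turnCost]
  exact C.turnCost_periodic.sum_range_neg

section ClosedWalk

def ofClosedWalk (k : ℕ) (hk : 2 ≤ k) (f : ℤ → Pixel) (hclosed : f k = f 0)
    (hadj : ∀ i : ℤ, 0 ≤ i → i < k → Adjacent (f i) (f (i + 1))) : GridCycle where
  k := k
  two_le := hk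
  pts i := f (i % k)
  periodic i := by rw [← Int.emod_eq_add_self_emod]
  adj i := by
    have hk₀ : (0 : ℤ) < k := by omega
    have h₀ := Int.emod_nonneg i hk₀.ne'
    have h₁ := Int.emod_lt_of_pos i hk₀
    rw [← Int.emod_add_emod]
    rcases (show i % k + 1 < k ∨ i % k + 1 = k by omega) with hlt | heq
    · rw [Int.emod_eq_of_lt (by omega) hlt]
      exact hadj _ h₀ h₁
    · have hlast := hadj _ h₀ h₁
      rw [heq, Int.emod_self, ← hclosed]
      rwa [heq] at hlast

variable {k : ℕ} {hk : 2 ≤ k} {f : ℤ → Pixel} {hclosed : f k = f 0}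
  {hadj : ∀ i : ℤ, 0 ≤ i → i < k → Adjacent (f i) (f (i + 1))}

theorem ofClosedWalk_pts {i : ℤ} (hi₀ : 0 ≤ i) (hik : i ≤ k) :
    (ofClosedWalk k hk f hclosed hadj).pts i = f i := by
  rcases hik.lt_or_eq with hlt | rfl
  · exact congrArg f (Int.emod_eq_of_lt hi₀ hlt)
  · exact (congrArg f (Int.emod_self)).trans hclosed.symm

theorem covers_ofClosedWalk : (ofClosedWalk k hk f hclosed hadj).covers = f '' Set.Ico 0 k := by
  rw [covers_eq_image_Ico]
  exact Set.image_congr fun i hi => ofClosedWalk_pts hi.1 hi.2.le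

end ClosedWalk

section append

variable (C₁ C₂ : GridCycle)

def appendWalk (i : ℤ) : Pixel := if i < C₁.k then C₁.pts i else C₂.pts (i - C₁.k)

variable {C₁ C₂}

theorem appendWalk_of_le (h : C₁.pts 0 = C₂.pts 0) {i : ℤ} (hi : i ≤ C₁.k) :
    appendWalk C₁ C₂ i = C₁.pts i := by
  rcases hi.lt_or_eq with hlt | rfl
  · exact if_pos hlt
  · rw [appendWalk, if_neg (lt_irrefl _), sub_self, ← h, C₁.pts_periodic.eq]

theorem appendWalk_of_ge {i : ℤ} (hi : C₁.k ≤ i) : appendWalk C₁ C₂ i = C₂.pts (i - C₁.k) :=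
  if_neg hi.not_gt

variable (C₁ C₂) in
def append (h : C₁.pts 0 = C₂.pts 0) : GridCycle :=
  ofClosedWalk (C₁.k + C₂.k) (C₁.two_le.trans (Nat.le_add_right _ _)) (appendWalk C₁ C₂)
    (by
      rw [appendWalk_of_ge (by omega), appendWalk_of_le h (by omega), Nat.cast_add,
        add_sub_cancel_left, C₂.pts_periodic.eq, h])
    (fun i h₀ hlt => by
      rcases lt_or_ge i C₁.k with hi | hi
      · rw [appendWalk_of_le h hi.le, appendWalk_of_le h (by omega)]
        exact C₁.adj i
      · rw [appendWalk_of_ge hi, appendWalk_of_ge (by omega), ← sub_add_eq_add_sub]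
        exact C₂.adj _)

variable (h : C₁.pts 0 = C₂.pts 0)

theorem append_pts_of_le {i : ℤ} (hi₀ : 0 ≤ i) (hi : i ≤ C₁.k) :
    (C₁.append C₂ h).pts i = C₁.pts i :=
  (ofClosedWalk_pts hi₀ (by omega)).trans (appendWalk_of_le h hi)

theorem append_pts_of_ge {i : ℤ} (hi : C₁.k ≤ i) (hi' : i ≤ C₁.k + C₂.k) :
    (C₁.append C₂ h).pts i = C₂.pts (i - C₁.k) :=
  (ofClosedWalk_pts (by omega) (by omega)).trans (appendWalk_of_ge hi)

theorem covers_append : (C₁.append C₂ h).covers = C₁.covers ∪ C₂.covers := by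
  rw [append, covers_ofClosedWalk, C₁.covers_eq_image_Ico, C₂.covers_eq_image_Ico,
    ← Set.Ico_union_Ico_eq_Ico (b := (C₁.k : ℤ)) (by omega) (by omega), Set.image_union]
  congr 1
  · exact Set.image_congr fun i hi => appendWalk_of_le h hi.2.le
  · rw [Set.image_congr fun i hi => appendWalk_of_ge hi.1, ← Set.image_image,
      Set.image_sub_const_Ico]
    simp

@[simp]
theorem append_k : (C₁.append C₂ h).k = C₁.k + C₂.k := rfl

theorem append_pts_neg_one : (C₁.append C₂ h).pts (-1) = C₂.pts (-1) := by
  have := C₂.two_le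
  rw [← (C₁.append C₂ h).periodic, append_k, append_pts_of_ge h (by omega) (by omega),
    Nat.cast_add, show -1 + (C₁.k + C₂.k : ℤ) - C₁.k = -1 + C₂.k by ring, C₂.periodic]

theorem append_inStep_zero : (C₁.append C₂ h).inStep 0 = C₂.inStep 0 := by
  rw [inStep, inStep, zero_sub, append_pts_neg_one,
    append_pts_of_le h (i := 0) le_rfl (by omega), h]

theorem append_outStep_zero : (C₁.append C₂ h).outStep 0 = C₁.outStep 0 := by
  rw [outStep, outStep, append_pts_of_le h (i := 0) le_rfl (by omega),
    append_pts_of_le h (by omega) (by have := C₁.two_le; omega)]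

theorem append_inStep_k : (C₁.append C₂ h).inStep C₁.k = C₁.inStep 0 := by
  have := C₁.two_le
  rw [inStep, inStep, append_pts_of_le h (by omega) le_rfl,
    append_pts_of_le h (by omega) (by omega), C₁.pts_periodic.eq, C₁.pts_periodic.sub_eq', zero_sub]

theorem append_outStep_k : (C₁.append C₂ h).outStep C₁.k = C₂.outStep 0 := by
  rw [outStep, outStep, append_pts_of_ge h le_rfl (by omega),
    append_pts_of_ge h (by omega) (by have := C₂.two_le; omega), sub_self, add_sub_cancel_left,
    zero_add]

theorem append_turnCost_of_lt {i : ℤ} (hi₀ : 0 < i) (hi : i < C₁.k) :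
    (C₁.append C₂ h).turnCost i = C₁.turnCost i :=
  turnCost_congr _ (append_pts_of_le h (by omega) (by omega)) (append_pts_of_le h hi₀.le hi.le)
    (append_pts_of_le h (by omega) (by omega))

theorem append_turnCost_add {j : ℤ} (hj₀ : 0 < j) (hj : j < C₂.k) :
    (C₁.append C₂ h).turnCost (C₁.k + j) = C₂.turnCost j := by
  refine turnCost_congr _ ?_ ?_ ?_ <;>
    rw [append_pts_of_ge h (by omega) (by omega)] <;> congr 1 <;> ring

theorem turns_append :
    (C₁.append C₂ h).turns + C₁.turnCost 0 + C₂.turnCost 0 =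
      C₁.turns + C₂.turns + turnCostOfSteps (C₂.inStep 0) (C₁.outStep 0) +
        turnCostOfSteps (C₁.inStep 0) (C₂.outStep 0) := by
  have h₁ := sum_range_add_apply_zero_eq (f := fun i : ℕ => (C₁.append C₂ h).turnCost i)
    (g := fun i : ℕ => C₁.turnCost i) (k := C₁.k) (by have := C₁.two_le; omega)
    fun i hi₀ hi => append_turnCost_of_lt h (by omega) (by omega)
  have h₂ := sum_range_add_apply_zero_eq (f := fun j : ℕ => (C₁.append C₂ h).turnCost (C₁.k + j))
    (g := fun j : ℕ => C₂.turnCost j) (k := C₂.k) (by have := C₂.two_le; omega)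
    fun j hj₀ hj => append_turnCost_add h (by omega) (by omega)
  simp only [Nat.cast_zero, add_zero] at h₁ h₂
  rw [(C₁.append C₂ h).turnCost_eq 0, append_inStep_zero, append_outStep_zero] at h₁
  rw [(C₁.append C₂ h).turnCost_eq C₁.k, append_inStep_k, append_outStep_k] at h₂
  simp only [turns, append_k, sum_range_add, Nat.cast_add]
  omega

end append

theorem exists_splice_of_pts_zero_eq {C₁ C₂ : GridCycle} (h : C₁.pts 0 = C₂.pts 0) :
    ∃ C : GridCycle, C.covers = C₁.covers ∪ C₂.covers ∧ C.turns ≤ C₁.turns + C₂.turns + 2 := by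
  rcases splice_turnCost_le _ (C₁.inStep_mem_unitSteps 0) _ (C₁.outStep_mem_unitSteps 0)
    _ (C₂.inStep_mem_unitSteps 0) _ (C₂.outStep_mem_unitSteps 0) with hfwd | hbwd
  · refine ⟨C₁.append C₂ h, covers_append h, ?_⟩
    have := turns_append h
    rw [turnCost_eq C₁, turnCost_eq C₂] at this
    omega
  · have h' : C₁.pts 0 = C₂.reverse.pts 0 := by simpa using h
    refine ⟨C₁.append C₂.reverse h', by rw [covers_append, covers_reverse], ?_⟩
    have := turns_append h'
    rw [reverse_inStep, reverse_outStep, neg_zero, turns_reverse, reverse_turnCost, neg_zero,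
      turnCost_eq C₁, turnCost_eq C₂] at this
    omega

end GridCycle

/-- Merging two intersecting cycles: if cycles `C₁`, `C₂` share a pixel `p`,
there is a single cycle covering exactly the union of their covered pixel sets
with at most `t₁ + t₂ + 2` turns. -/
theorem merge_intersecting_cycles (C₁ C₂ : GridCycle) (p : Pixel)
    (hp₁ : p ∈ C₁.covers) (hp₂ : p ∈ C₂.covers) :
    ∃ C : GridCycle, C.covers = C₁.covers ∪ C₂.covers ∧
      C.turns ≤ C₁.turns + C₂.turns + 2 := by
  obtain ⟨a, rfl⟩ := hp₁
  obtain ⟨b, hb⟩ := hp₂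
  have h : (C₁.rotate a).pts 0 = (C₂.rotate b).pts 0 := by simp [hb]
  simpa using GridCycle.exists_splice_of_pts_zero_eq h
end

section
/- For every region P with at least two pixels, every cycle cover of P (in particular every tour of P) has a number of turns at least equal to the minimum size of a strip cover of P. -/
/-!
At every position of a cycle, pick the strip of `P` containing the step just taken. Two
horizontal (or two vertical) strips of `P` sharing a pixel coincide, so a straight step stays in
the strip of the previous step: along a cycle the chosen strip changes only at positions of
positive turn cost. A closed walk must turn, so the strips chosen along a cycle with `t` turns
are at most `t` in number, and they cover the cycle. The union over all cycles of the cover is a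
strip cover of `P` with at most as many strips as the cover has turns.
-/

open Finset

lemma exists_maximal_run_of_finite {Q : ℤ → Prop} (hQ : {t | Q t}.Finite) {a : ℤ} (ha : Q a) :
    ∃ (x : ℤ) (ℓ : ℕ), x ≤ a ∧ a ≤ x + ℓ ∧ (∀ t, x ≤ t → t ≤ x + ℓ → Q t) ∧
      ¬Q (x - 1) ∧ ¬Q (x + ℓ + 1) := by
  obtain ⟨m, hm⟩ := hQ.bddBelow
  obtain ⟨M, hM⟩ := hQ.bddAbove
  obtain ⟨x, ⟨hxa, hx⟩, hxmax⟩ := Int.exists_greatest_of_bdd (P := fun t => t ≤ a ∧ ¬Q t)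
    ⟨a, fun _ h => h.1⟩ ⟨min m a - 1, by omega, fun h => by have := hm h; omega⟩
  obtain ⟨y, ⟨hay, hy⟩, hymin⟩ := Int.exists_least_of_bdd (P := fun t => a ≤ t ∧ ¬Q t)
    ⟨a, fun _ h => h.1⟩ ⟨max M a + 1, by omega, fun h => by have := hM h; omega⟩
  have hxa' : x < a := lt_of_le_of_ne hxa (by rintro rfl; exact hx ha)
  have hay' : a < y := lt_of_le_of_ne hay (by rintro rfl; exact hy ha)
  have hℓ : ((y - x - 2).toNat : ℤ) = y - x - 2 := Int.toNat_of_nonneg (by omega)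
  refine ⟨x + 1, (y - x - 2).toNat, by omega, by omega, fun t h1 h2 => ?_, by simpa using hx,
    by rwa [hℓ, show x + 1 + (y - x - 2) + 1 = y by ring]⟩
  by_contra hQt
  rcases le_total t a with h | h
  · have := hxmax t ⟨h, hQt⟩; omega
  · have := hymin t ⟨h, hQt⟩; omega

lemma card_toFinset_biUnion_le {ι α : Type*} [DecidableEq ι] [DecidableEq α] (l : List ι)
    (t : ι → Finset α) : #(l.toFinset.biUnion t) ≤ (l.map fun i => #(t i)).sum := by
  induction l with
  | nil => simp
  | cons i l ih =>
    rw [List.toFinset_cons, biUnion_insert, List.map_cons, List.sum_cons]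
    exact (card_union_le _ _).trans (Nat.add_le_add_left ih _)

lemma card_image_range_le_max_card_filter_ne {α : Type*} [DecidableEq α] (f : ℕ → α) {k : ℕ}
    (hk : f k = f 0) : #((range k).image f) ≤ max 1 #{j ∈ range k | f (j + 1) ≠ f j} := by
  set D := {j ∈ range k | f (j + 1) ≠ f j}
  have key : ∀ j ≤ k, (f j = f 0 ∧ ∀ d ∈ D, j ≤ d) ∨ ∃ d ∈ D, f (d + 1) = f j := by
    intro j
    induction j with
    | zero => simp
    | succ j ih =>
      intro hj
      by_cases hjD : j ∈ D
      · exact Or.inr ⟨j, hjD, rfl⟩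
      have hfj : f (j + 1) = f j := by
        by_contra h
        exact hjD (mem_filter.2 ⟨mem_range.2 hj, h⟩)
      rcases ih (by omega) with ⟨h0, hD⟩ | ⟨d, hd, hdj⟩
      · refine Or.inl ⟨hfj.trans h0, fun d hd => ?_⟩
        exact lt_of_le_of_ne (hD d hd) (by rintro rfl; exact hjD hd)
      · exact Or.inr ⟨d, hd, hdj.trans hfj.symm⟩
  rcases D.eq_empty_or_nonempty with hD | ⟨d₀, hd₀⟩
  · refine le_max_of_le_left
      ((card_le_card (t := {f 0}) fun y hy => ?_).trans (card_singleton _).le)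
    obtain ⟨j, hj, rfl⟩ := mem_image.1 hy
    rcases key j (mem_range.1 hj).le with ⟨h, -⟩ | ⟨d, hd, -⟩
    · exact mem_singleton.2 h
    · simp [hD] at hd
  · have hk' : f k ∈ D.image fun d => f (d + 1) := by
      rcases key k le_rfl with ⟨-, hD⟩ | ⟨d, hd, hdk⟩
      · exact absurd (hD d₀ hd₀) (not_le.2 (mem_range.1 (mem_filter.1 hd₀).1))
      · exact mem_image.2 ⟨d, hd, hdk⟩
    refine le_max_of_le_right
      ((card_le_card (t := D.image fun d => f (d + 1)) fun y hy => ?_).trans card_image_le)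
    obtain ⟨j, hj, rfl⟩ := mem_image.1 hy
    rcases key j (mem_range.1 hj).le with ⟨h, -⟩ | ⟨d, hd, hdj⟩
    · rwa [h, ← hk]
    · exact mem_image.2 ⟨d, hd, hdj⟩

lemma Adjacent.snd_eq_or_fst_eq {p q : Pixel} (h : Adjacent p q) :
    (p.2 = q.2 ∧ (q.1 = p.1 + 1 ∨ q.1 = p.1 - 1)) ∨
      (p.1 = q.1 ∧ (q.2 = p.2 + 1 ∨ q.2 = p.2 - 1)) := by
  unfold Adjacent at h
  rcases abs_cases (p.1 - q.1) with ⟨h1, _⟩ | ⟨h1, _⟩ <;>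
    rcases abs_cases (p.2 - q.2) with ⟨h2, _⟩ | ⟨h2, _⟩ <;> rw [h1, h2] at h <;> omega

variable {P S T : Set Pixel} {a b c : Pixel}

namespace IsHStrip

lemma subset (hS : IsHStrip P S) : S ⊆ P := by
  obtain ⟨_, _, _, -, h, -⟩ := hS
  exact h

lemma snd_eq (hS : IsHStrip P S) (ha : a ∈ S) (hb : b ∈ S) : a.2 = b.2 := by
  obtain ⟨x, y, ℓ, rfl, -⟩ := hS
  exact ha.1.trans hb.1.symm

lemma subset_of_mem (hS : IsHStrip P S) (hT : IsHStrip P T) (haS : a ∈ S) (haT : a ∈ T) :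
    S ⊆ T := by
  obtain ⟨x, y, ℓ, rfl, hSP, -⟩ := hS
  obtain ⟨x', y', ℓ', rfl, -, hl, hr⟩ := hT
  rintro ⟨q1, q2⟩ ⟨hq2, hq1, hq1'⟩
  obtain ⟨ha2, ha1, ha1'⟩ := haS
  obtain ⟨ha2', ha1'', ha1'''⟩ := haT
  dsimp only at *
  refine ⟨by omega, ?_, ?_⟩
  · by_contra
    refine hl (hSP ⟨?_, ?_, ?_⟩) <;> dsimp only <;> omega
  · by_contra
    refine hr (hSP ⟨?_, ?_, ?_⟩) <;> dsimp only <;> omega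

lemma eq_of_mem (hS : IsHStrip P S) (hT : IsHStrip P T) (haS : a ∈ S) (haT : a ∈ T) : S = T :=
  (hS.subset_of_mem hT haS haT).antisymm (hT.subset_of_mem hS haT haS)

lemma mem_of_adjacent (hS : IsHStrip P S) (ha : a ∈ S) (hb : b ∈ P) (hab : Adjacent a b)
    (h : a.2 = b.2) : b ∈ S := by
  have hb1 : b.1 = a.1 + 1 ∨ b.1 = a.1 - 1 := by
    rcases hab.snd_eq_or_fst_eq with ⟨-, h'⟩ | ⟨-, h'⟩ <;> omega
  obtain ⟨x, y, ℓ, rfl, -, hl, hr⟩ := hS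
  obtain ⟨ha2, ha1, ha1'⟩ := ha
  rcases b with ⟨b1, b2⟩
  dsimp only at *
  refine ⟨by omega, ?_, ?_⟩
  · by_contra
    obtain rfl : b1 = x - 1 := by omega
    exact hl (ha2 ▸ h ▸ hb)
  · by_contra
    obtain rfl : b1 = x + ℓ + 1 := by omega
    exact hr (ha2 ▸ h ▸ hb)

lemma exists_mem (hP : P.Finite) (ha : a ∈ P) : ∃ S, IsHStrip P S ∧ a ∈ S := by
  obtain ⟨x, ℓ, hxa, hax, hrun, hl, hr⟩ := exists_maximal_run_of_finite
    (Q := fun t => (t, a.2) ∈ P) (hP.preimage fun _ _ _ _ h => congrArg Prod.fst h) ha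
  refine ⟨{p | p.2 = a.2 ∧ x ≤ p.1 ∧ p.1 ≤ x + ℓ}, ⟨x, a.2, ℓ, rfl, ?_, hl, hr⟩, rfl, hxa, hax⟩
  rintro ⟨p1, p2⟩ ⟨rfl, hp1, hp1'⟩
  exact hrun p1 hp1 hp1'

end IsHStrip

namespace IsVStrip

lemma subset (hS : IsVStrip P S) : S ⊆ P := by
  obtain ⟨_, _, _, -, h, -⟩ := hS
  exact h

lemma fst_eq (hS : IsVStrip P S) (ha : a ∈ S) (hb : b ∈ S) : a.1 = b.1 := by
  obtain ⟨x, y, ℓ, rfl, -⟩ := hS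
  exact ha.1.trans hb.1.symm

lemma subset_of_mem (hS : IsVStrip P S) (hT : IsVStrip P T) (haS : a ∈ S) (haT : a ∈ T) :
    S ⊆ T := by
  obtain ⟨x, y, ℓ, rfl, hSP, -⟩ := hS
  obtain ⟨x', y', ℓ', rfl, -, hl, hr⟩ := hT
  rintro ⟨q1, q2⟩ ⟨hq1, hq2, hq2'⟩
  obtain ⟨ha1, ha2, ha2'⟩ := haS
  obtain ⟨ha1', ha2'', ha2'''⟩ := haT
  dsimp only at *
  refine ⟨by omega, ?_, ?_⟩
  · by_contra
    refine hl (hSP ⟨?_, ?_, ?_⟩) <;> dsimp only <;> omega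
  · by_contra
    refine hr (hSP ⟨?_, ?_, ?_⟩) <;> dsimp only <;> omega

lemma eq_of_mem (hS : IsVStrip P S) (hT : IsVStrip P T) (haS : a ∈ S) (haT : a ∈ T) : S = T :=
  (hS.subset_of_mem hT haS haT).antisymm (hT.subset_of_mem hS haT haS)

lemma mem_of_adjacent (hS : IsVStrip P S) (ha : a ∈ S) (hb : b ∈ P) (hab : Adjacent a b)
    (h : a.1 = b.1) : b ∈ S := by
  have hb2 : b.2 = a.2 + 1 ∨ b.2 = a.2 - 1 := by
    rcases hab.snd_eq_or_fst_eq with ⟨-, h'⟩ | ⟨-, h'⟩ <;> omega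
  obtain ⟨x, y, ℓ, rfl, -, hl, hr⟩ := hS
  obtain ⟨ha1, ha2, ha2'⟩ := ha
  rcases b with ⟨b1, b2⟩
  dsimp only at *
  refine ⟨by omega, ?_, ?_⟩
  · by_contra
    obtain rfl : b2 = y - 1 := by omega
    exact hl (ha1 ▸ h ▸ hb)
  · by_contra
    obtain rfl : b2 = y + ℓ + 1 := by omega
    exact hr (ha1 ▸ h ▸ hb)

lemma exists_mem (hP : P.Finite) (ha : a ∈ P) : ∃ S, IsVStrip P S ∧ a ∈ S := by
  obtain ⟨y, ℓ, hya, hay, hrun, hl, hr⟩ := exists_maximal_run_of_finite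
    (Q := fun t => (a.1, t) ∈ P) (hP.preimage fun _ _ _ _ h => congrArg Prod.snd h) ha
  refine ⟨{p | p.1 = a.1 ∧ y ≤ p.2 ∧ p.2 ≤ y + ℓ}, ⟨a.1, y, ℓ, rfl, ?_, hl, hr⟩, rfl, hya, hay⟩
  rintro ⟨p1, p2⟩ ⟨rfl, hp2, hp2'⟩
  exact hrun p2 hp2 hp2'

end IsVStrip

namespace IsStrip

lemma subset (hS : IsStrip P S) : S ⊆ P :=
  hS.elim IsHStrip.subset IsVStrip.subset

lemma isHStrip (hS : IsStrip P S) (ha : a ∈ S) (hb : b ∈ S) (h : a.1 ≠ b.1) : IsHStrip P S :=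
  hS.resolve_right fun hV => h (hV.fst_eq ha hb)

lemma isVStrip (hS : IsStrip P S) (ha : a ∈ S) (hb : b ∈ S) (h : a.2 ≠ b.2) : IsVStrip P S :=
  hS.resolve_left fun hH => h (hH.snd_eq ha hb)

lemma eq_of_straight (hS : IsStrip P S) (hT : IsStrip P T) (hab : Adjacent a b) (haS : a ∈ S)
    (hbS : b ∈ S) (hbT : b ∈ T) (hcT : c ∈ T) (hstraight : c - b = b - a) : S = T := by
  have h1 : c.1 - b.1 = b.1 - a.1 := congrArg Prod.fst hstraight
  have h2 : c.2 - b.2 = b.2 - a.2 := congrArg Prod.snd hstraight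
  rcases hab.snd_eq_or_fst_eq with ⟨-, h⟩ | ⟨-, h⟩
  · exact (hS.isHStrip haS hbS (by omega)).eq_of_mem (hT.isHStrip hbT hcT (by omega)) hbS hbT
  · exact (hS.isVStrip haS hbS (by omega)).eq_of_mem (hT.isVStrip hbT hcT (by omega)) hbS hbT

end IsStrip

lemma exists_isStrip_mem_mem (hP : P.Finite) (ha : a ∈ P) (hb : b ∈ P) (hab : Adjacent a b) :
    ∃ S, IsStrip P S ∧ a ∈ S ∧ b ∈ S := by
  rcases hab.snd_eq_or_fst_eq with ⟨h, -⟩ | ⟨h, -⟩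
  · obtain ⟨S, hS, haS⟩ := IsHStrip.exists_mem hP ha
    exact ⟨S, Or.inl hS, haS, hS.mem_of_adjacent haS hb hab h⟩
  · obtain ⟨S, hS, haS⟩ := IsVStrip.exists_mem hP ha
    exact ⟨S, Or.inr hS, haS, hS.mem_of_adjacent haS hb hab h⟩

namespace GridCycle

noncomputable def stepStrip (P : Set Pixel) (C : GridCycle) (i : ℤ) : Set Pixel :=
  Classical.epsilon fun S => IsStrip P S ∧ C.pts (i - 1) ∈ S ∧ C.pts i ∈ S

open Classical in
noncomputable def strips (P : Set Pixel) (C : GridCycle) : Finset (Set Pixel) :=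
  (range C.k).image fun j : ℕ => C.stepStrip P j

variable (C : GridCycle)

lemma straight_of_turnCost_eq_zero {i : ℤ} (h : C.turnCost i = 0) :
    C.pts (i + 1) - C.pts i = C.pts i - C.pts (i - 1) := by
  unfold turnCost at h
  split_ifs at h with h'
  exact h'

lemma turns_pos : 0 < C.turns := by
  by_contra! h0
  have hzero : ∀ j < C.k, C.turnCost j = 0 := fun j hj =>
    sum_eq_zero_iff.1 (Nat.le_zero.1 h0) j (mem_range.2 hj)
  set v := C.pts 1 - C.pts 0
  have hstep : ∀ j < C.k, C.pts (j + 1 : ℕ) - C.pts j = v := by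
    intro j
    induction j with
    | zero => intro _; simp [v]
    | succ j ih =>
      intro hj
      rw [← ih (by omega)]
      have := C.straight_of_turnCost_eq_zero (hzero (j + 1) hj)
      push_cast at this ⊢
      simpa using this
  have hkv : C.k • v = 0 := by
    calc C.k • v = ∑ j ∈ range C.k, (C.pts (j + 1 : ℕ) - C.pts j) := by
          rw [sum_congr rfl fun j hj => hstep j (mem_range.1 hj), sum_const, card_range]
      _ = 0 := by
          rw [sum_range_sub (fun j : ℕ => C.pts j)]
          simpa using sub_eq_zero.2 (C.periodic 0)
  have hv : v = 0 := (smul_eq_zero.1 hkv).resolve_left (by have := C.two_le; omega)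
  have hadj := C.adj 0
  rw [zero_add, ← sub_eq_zero.1 hv] at hadj
  simp [Adjacent] at hadj

variable {C}

lemma stepStrip_spec (hP : P.Finite) (hC : C.covers ⊆ P) (i : ℤ) :
    IsStrip P (C.stepStrip P i) ∧ C.pts (i - 1) ∈ C.stepStrip P i ∧ C.pts i ∈ C.stepStrip P i :=
  Classical.epsilon_spec (exists_isStrip_mem_mem hP (hC ⟨_, rfl⟩) (hC ⟨_, rfl⟩)
    (by simpa using C.adj (i - 1)))

lemma stepStrip_succ_eq (hP : P.Finite) (hC : C.covers ⊆ P) {i : ℤ} (h : C.turnCost i = 0) :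
    C.stepStrip P (i + 1) = C.stepStrip P i := by
  obtain ⟨hS, haS, hbS⟩ := stepStrip_spec hP hC i
  obtain ⟨hT, hbT, hcT⟩ := stepStrip_spec hP hC (i + 1)
  rw [add_sub_cancel_right] at hbT
  exact (hS.eq_of_straight hT (by simpa using C.adj (i - 1)) haS hbS hbT hcT
    (C.straight_of_turnCost_eq_zero h)).symm

lemma stepStrip_period (P : Set Pixel) : C.stepStrip P C.k = C.stepStrip P 0 := by
  have hk : C.pts (C.k - 1) = C.pts (0 - 1) := by simpa [neg_add_eq_sub] using C.periodic (-1)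
  simp only [stepStrip, hk, show C.pts C.k = C.pts 0 by simpa using C.periodic 0]

lemma card_strips_le_turns (hP : P.Finite) (hC : C.covers ⊆ P) : #(C.strips P) ≤ C.turns := by
  classical
  refine (card_image_range_le_max_card_filter_ne _ (by simpa using stepStrip_period P)).trans
    (max_le C.turns_pos ?_)
  rw [card_filter]
  refine sum_le_sum fun j _ => ?_
  split_ifs with hj
  · exact Nat.one_le_iff_ne_zero.2 fun h0 => hj (by push_cast; exact stepStrip_succ_eq hP hC h0)
  · exact Nat.zero_le _

lemma isStrip_of_mem_strips (hP : P.Finite) (hC : C.covers ⊆ P) (hS : S ∈ C.strips P) :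
    IsStrip P S := by
  obtain ⟨j, -, rfl⟩ := mem_image.1 hS
  exact (stepStrip_spec hP hC j).1

lemma exists_mem_strips (hP : P.Finite) (hC : C.covers ⊆ P) (hp : a ∈ C.covers) :
    ∃ S ∈ C.strips P, a ∈ S := by
  obtain ⟨i, rfl⟩ := hp
  obtain ⟨j, ⟨hj0, hjk⟩, hij⟩ := Function.Periodic.exists_mem_Ico₀ C.periodic
    (by have := C.two_le; omega) i
  lift j to ℕ using hj0
  exact ⟨_, mem_image_of_mem _ (mem_range.2 (by omega)), hij ▸ (stepStrip_spec hP hC j).2.2⟩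

end GridCycle

theorem stripCover_le_cycleCover_turns_general (P : Set Pixel) (hP : IsRegion P)
    (CC : List GridCycle) (hCC : IsCycleCover P CC) :
    minStripCover P ≤ coverTurns CC := by
  classical
  obtain ⟨hfin, -, -⟩ := hP
  obtain ⟨hsub, hcov⟩ := hCC
  set F := CC.toFinset.biUnion (·.strips P)
  have hstrip : ∀ S ∈ F, IsStrip P S := fun S hS => by
    obtain ⟨C, hC, hSC⟩ := mem_biUnion.1 hS
    exact GridCycle.isStrip_of_mem_strips hfin (hsub C (List.mem_toFinset.1 hC)) hSC
  have hF : IsStripCover P F := by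
    refine ⟨hstrip, (Set.sUnion_subset fun S hS => (hstrip S hS).subset).antisymm
      fun p hp => ?_⟩
    obtain ⟨C, hC, hpC⟩ := hcov p hp
    obtain ⟨S, hS, hpS⟩ := GridCycle.exists_mem_strips hfin (hsub C hC) hpC
    exact ⟨S, mem_coe.2 (mem_biUnion.2 ⟨C, List.mem_toFinset.2 hC, hS⟩), hpS⟩
  calc minStripCover P ≤ #F := Nat.sInf_le ⟨F, hF, Set.ncard_coe_finset F⟩
    _ ≤ (CC.map fun C => #(C.strips P)).sum := card_toFinset_biUnion_le CC _
    _ ≤ coverTurns CC :=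
        List.sum_le_sum fun C hC => GridCycle.card_strips_le_turns hfin (hsub C hC)

/-- Strip-cover lower bound: for a region `P` with at least two pixels, every
cycle cover of `P` (in particular every tour) has at least as many turns as
the minimum size of a strip cover of `P`. -/
theorem stripCover_le_cycleCover_turns (P : Set Pixel) (hP : IsRegion P)
    (h2 : 2 ≤ P.ncard) (CC : List GridCycle) (hCC : IsCycleCover P CC) :
    minStripCover P ≤ coverTurns CC :=
  stripCover_le_cycleCover_turns_general P hP CC hCC
end

section
/- For every rook placement R in a region P, every cycle cover of P (in particular every tour of P) has at least |R| turns. -/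
/-! Charge every rook to a turn. Walking forward along a cycle from a rook, the walk goes straight
until it reaches a position of nonzero turn cost (it cannot go straight forever and come back).
The pixels passed form a straight run in `P`, hence lie in one strip, so two rooks charged to the
same position of the same cycle would share a strip. The charge is therefore injective into the
turning positions, of which there are at most as many as turns. -/

theorem Int.exists_Icc_subset_of_Icc_subset {T : Set ℤ} (hT : T.Finite) {a b : ℤ} (hab : a ≤ b)
    (h : Set.Icc a b ⊆ T) :
    ∃ x y, x ≤ a ∧ b ≤ y ∧ Set.Icc x y ⊆ T ∧ x - 1 ∉ T ∧ y + 1 ∉ T := by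
  obtain ⟨lo, hlo⟩ := hT.bddBelow
  obtain ⟨hi, hhi⟩ := hT.bddAbove
  have ha : a ∈ T := h ⟨le_rfl, hab⟩
  have hb : b ∈ T := h ⟨hab, le_rfl⟩
  obtain ⟨x, ⟨hxa, hxT⟩, hxmin⟩ :=
    Int.exists_least_of_bdd (P := fun x => x ≤ a ∧ Set.Icc x a ⊆ T)
    ⟨lo, fun z hz => hlo (hz.2 ⟨le_rfl, hz.1⟩)⟩ ⟨a, le_rfl, by simpa using ha⟩
  obtain ⟨y, ⟨hby, hyT⟩, hymax⟩ :=
    Int.exists_greatest_of_bdd (P := fun y => b ≤ y ∧ Set.Icc b y ⊆ T)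
    ⟨hi, fun z hz => hhi (hz.2 ⟨hz.1, le_rfl⟩)⟩ ⟨b, le_rfl, by simpa using hb⟩
  refine ⟨x, y, hxa, hby, fun w ⟨hxw, hwy⟩ => ?_, fun hx => ?_, fun hy => ?_⟩
  · rcases le_or_gt w a with hwa | hwa
    · exact hxT ⟨hxw, hwa⟩
    rcases le_or_gt b w with hbw | hbw
    · exact hyT ⟨hbw, hwy⟩
    · exact h ⟨hwa.le, hbw.le⟩
  · have := hxmin (x - 1) ⟨by omega, fun w ⟨h1, h2⟩ => ?_⟩
    · omega
    rcases eq_or_lt_of_le h1 with rfl | h1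
    · exact hx
    · exact hxT ⟨by omega, h2⟩
  · have := hymax (y + 1) ⟨by omega, fun w ⟨h1, h2⟩ => ?_⟩
    · omega
    rcases eq_or_lt_of_le h2 with rfl | h2
    · exact hy
    · exact hyT ⟨h1, by omega⟩

theorem exists_hStrip {P : Set Pixel} (hP : P.Finite) {a b : ℤ} (hab : a ≤ b) (y : ℤ)
    (h : ∀ x ∈ Set.Icc a b, (x, y) ∈ P) :
    ∃ S, IsStrip P S ∧ ∀ x ∈ Set.Icc a b, (x, y) ∈ S := by
  have hT : ((·, y) ⁻¹' P : Set ℤ).Finite := hP.preimage (fun _ _ _ _ h => (Prod.mk.inj h).1)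
  obtain ⟨x₀, x₁, hx₀, hx₁, hsub, hl, hr⟩ := Int.exists_Icc_subset_of_Icc_subset hT hab h
  have hℓ : x₀ + ((x₁ - x₀).toNat : ℤ) = x₁ := by omega
  refine ⟨_, Or.inl ⟨x₀, y, (x₁ - x₀).toNat, rfl, ?_, hl, by rwa [hℓ]⟩, ?_⟩
  · rintro ⟨x, y⟩ ⟨rfl, h₀, h₁⟩
    exact hsub ⟨h₀, hℓ ▸ h₁⟩
  · rintro x ⟨h₀, h₁⟩
    exact ⟨rfl, by omega, by omega⟩

theorem exists_vStrip {P : Set Pixel} (hP : P.Finite) {a b : ℤ} (hab : a ≤ b) (x : ℤ)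
    (h : ∀ y ∈ Set.Icc a b, (x, y) ∈ P) :
    ∃ S, IsStrip P S ∧ ∀ y ∈ Set.Icc a b, (x, y) ∈ S := by
  have hT : ((x, ·) ⁻¹' P : Set ℤ).Finite := hP.preimage (fun _ _ _ _ h => (Prod.mk.inj h).2)
  obtain ⟨y₀, y₁, hy₀, hy₁, hsub, hl, hr⟩ := Int.exists_Icc_subset_of_Icc_subset hT hab h
  have hℓ : y₀ + ((y₁ - y₀).toNat : ℤ) = y₁ := by omega
  refine ⟨_, Or.inr ⟨x, y₀, (y₁ - y₀).toNat, rfl, ?_, hl, by rwa [hℓ]⟩, ?_⟩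
  · rintro ⟨x, y⟩ ⟨rfl, h₀, h₁⟩
    exact hsub ⟨h₀, hℓ ▸ h₁⟩
  · rintro y ⟨h₀, h₁⟩
    exact ⟨rfl, by omega, by omega⟩

theorem exists_strip_of_run {P : Set Pixel} (hP : P.Finite) {q d : Pixel}
    (hd : d = (1, 0) ∨ d = (-1, 0) ∨ d = (0, 1) ∨ d = (0, -1)) {m : ℕ}
    (h : ∀ u ≤ m, q - u • d ∈ P) : ∃ S, IsStrip P S ∧ ∀ u ≤ m, q - u • d ∈ S := by
  obtain ⟨q₁, q₂⟩ := q
  rcases hd with rfl | rfl | rfl | rfl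
  · obtain ⟨S, hS, hmem⟩ := exists_hStrip hP (a := q₁ - m) (b := q₁) (by omega) q₂
      fun x ⟨h₁, h₂⟩ => by
        simpa [Int.toNat_of_nonneg (sub_nonneg.2 h₂)] using h (q₁ - x).toNat (by omega)
    exact ⟨S, hS, fun u hu => by simpa using hmem (q₁ - u) ⟨by omega, by omega⟩⟩
  · obtain ⟨S, hS, hmem⟩ := exists_hStrip hP (a := q₁) (b := q₁ + m) (by omega) q₂
      fun x ⟨h₁, h₂⟩ => by
        simpa [Int.toNat_of_nonneg (sub_nonneg.2 h₁)] using h (x - q₁).toNat (by omega)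
    exact ⟨S, hS, fun u hu => by simpa using hmem (q₁ + u) ⟨by omega, by omega⟩⟩
  · obtain ⟨S, hS, hmem⟩ := exists_vStrip hP (a := q₂ - m) (b := q₂) (by omega) q₁
      fun y ⟨h₁, h₂⟩ => by
        simpa [Int.toNat_of_nonneg (sub_nonneg.2 h₂)] using h (q₂ - y).toNat (by omega)
    exact ⟨S, hS, fun u hu => by simpa using hmem (q₂ - u) ⟨by omega, by omega⟩⟩
  · obtain ⟨S, hS, hmem⟩ := exists_vStrip hP (a := q₂) (b := q₂ + m) (by omega) q₁
      fun y ⟨h₁, h₂⟩ => by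
        simpa [Int.toNat_of_nonneg (sub_nonneg.2 h₁)] using h (y - q₂).toNat (by omega)
    exact ⟨S, hS, fun u hu => by simpa using hmem (q₂ + u) ⟨by omega, by omega⟩⟩

theorem IsRookPlacement.eq_of_runs {P R : Set Pixel} (hR : IsRookPlacement P R) (hP : P.Finite)
    {q d : Pixel} (hd : d = (1, 0) ∨ d = (-1, 0) ∨ d = (0, 1) ∨ d = (0, -1)) {m m' : ℕ}
    (hm : ∀ u ≤ m, q - u • d ∈ P) (hm' : ∀ u ≤ m', q - u • d ∈ P)
    (hr : q - m • d ∈ R) (hr' : q - m' • d ∈ R) : q - m • d = q - m' • d := by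
  wlog hle : m ≤ m' generalizing m m'
  · exact (this hm' hm hr' hr (by omega)).symm
  by_contra hne
  obtain ⟨S, hS, hmem⟩ := exists_strip_of_run hP hd hm'
  exact hR.2 _ hr _ hr' hne ⟨S, hS, hmem m hle, hmem m' le_rfl⟩

theorem Adjacent.sub_eq {p q : Pixel} (h : Adjacent p q) :
    q - p = (1, 0) ∨ q - p = (-1, 0) ∨ q - p = (0, 1) ∨ q - p = (0, -1) := by
  obtain ⟨a, b⟩ := p
  obtain ⟨c, d⟩ := q
  simp only [Adjacent, Int.abs_eq_natAbs] at h
  simp only [Prod.mk_sub_mk, Prod.mk.injEq]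
  omega

theorem Function.Periodic.map_emod {β : Type*} {f : ℤ → β} {c : ℤ} (h : Function.Periodic f c)
    (x : ℤ) : f (x % c) = f x := by
  simpa [Int.emod_def, mul_comm] using h.sub_int_mul_eq (x := x) (x / c)

namespace GridCycle

variable (C : GridCycle)

def step (i : ℤ) : Pixel := C.pts (i + 1) - C.pts i

def turnIndices : Finset ℕ := (Finset.range C.k).filter fun j => C.turnCost j ≠ 0

def RunsInto (r : Pixel) (j : ℤ) : Prop :=
  ∃ m : ℕ, r = C.pts j - m • C.step (j - 1) ∧ ∀ u ≤ m, C.pts j - u • C.step (j - 1) ∈ C.covers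

theorem step_eq (i : ℤ) :
    C.step i = (1, 0) ∨ C.step i = (-1, 0) ∨ C.step i = (0, 1) ∨ C.step i = (0, -1) :=
  (C.adj i).sub_eq

theorem step_ne_zero (i : ℤ) : C.step i ≠ 0 := by
  rcases C.step_eq i with h | h | h | h <;> simp [h]

theorem periodic_pts : Function.Periodic C.pts C.k := C.periodic

theorem periodic_turnCost : Function.Periodic C.turnCost C.k := fun i => by
  simp only [turnCost, add_right_comm _ (C.k : ℤ), ← sub_add_eq_add_sub, C.periodic]

theorem periodic_runsInto (r : Pixel) : Function.Periodic (C.RunsInto r) C.k := fun j => by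
  simp only [RunsInto, step, ← sub_add_eq_add_sub, add_right_comm _ (C.k : ℤ), C.periodic]

theorem turnCost_eq_zero_iff (i : ℤ) : C.turnCost i = 0 ↔ C.step i = C.step (i - 1) := by
  simp only [turnCost, step, sub_add_cancel]
  split_ifs <;> simp_all

theorem covers_finite : C.covers.Finite := by
  refine ((Set.finite_Ico 0 (C.k : ℤ)).image C.pts).subset ?_
  rintro _ ⟨i, rfl⟩
  have hk : (0 : ℤ) < C.k := by have := C.two_le; omega
  exact ⟨i % C.k, ⟨Int.emod_nonneg _ hk.ne', Int.emod_lt_of_pos _ hk⟩, C.periodic_pts.map_emod i⟩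

theorem card_turnIndices_le_turns : C.turnIndices.card ≤ C.turns := by
  calc C.turnIndices.card = C.turnIndices.card • 1 := by rw [smul_eq_mul, mul_one]
    _ ≤ ∑ j ∈ C.turnIndices, C.turnCost j :=
      Finset.card_nsmul_le_sum _ _ _ fun j hj => Nat.one_le_iff_ne_zero.2 (Finset.mem_filter.1 hj).2
    _ = C.turns := Finset.sum_filter_ne_zero _

theorem step_add_eq {i : ℤ} {t : ℕ} (h : ∀ s < t, C.turnCost (i + s + 1) = 0) :
    ∀ s ≤ t, C.step (i + s) = C.step i
  | 0, _ => by simp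
  | s + 1, hs => by
    rw [← step_add_eq h s (by omega), Nat.cast_succ, ← add_assoc,
      (C.turnCost_eq_zero_iff _).1 (h s (by omega)), add_sub_cancel_right]

theorem pts_add_eq {i : ℤ} {t : ℕ} (h : ∀ s < t, C.turnCost (i + s + 1) = 0) :
    ∀ s ≤ t + 1, C.pts (i + s) = C.pts i + s • C.step i
  | 0, _ => by simp
  | s + 1, hs => by
    have hnext : C.pts (i + s + 1) = C.pts (i + s) + C.step (i + s) := (add_sub_cancel _ _).symm
    rw [Nat.cast_succ, ← add_assoc, hnext, pts_add_eq h s (by omega), C.step_add_eq h s (by omega),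
      succ_nsmul, add_assoc]

theorem exists_turnCost_ne_zero (i : ℤ) : ∃ t : ℕ, C.turnCost (i + t + 1) ≠ 0 := by
  by_contra! h
  have hk := C.pts_add_eq (t := C.k - 1) (fun s _ => h s) C.k (by omega)
  rw [C.periodic, left_eq_add, smul_eq_zero] at hk
  exact hk.elim (by have := C.two_le; omega) (C.step_ne_zero i)

theorem exists_runsInto (i : ℤ) : ∃ j, C.turnCost j ≠ 0 ∧ C.RunsInto (C.pts i) j := by
  classical
  have hex := C.exists_turnCost_ne_zero i
  set t := Nat.find hex
  have hstraight : ∀ s < t, C.turnCost (i + s + 1) = 0 :=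
    fun s hs => not_not.1 (Nat.find_min hex hs)
  have hpts := C.pts_add_eq hstraight
  have hstep : C.step (i + t + 1 - 1) = C.step i := by
    rw [add_sub_cancel_right]
    exact C.step_add_eq hstraight t le_rfl
  have hj := hpts (t + 1) le_rfl
  rw [Nat.cast_succ, ← add_assoc] at hj
  refine ⟨i + t + 1, Nat.find_spec hex, t + 1, ?_, fun u hu => ⟨i + (t + 1 - u : ℕ), ?_⟩⟩
  · rw [hstep, hj, add_sub_cancel_right]
  · rw [hstep, hj, hpts _ (by omega), sub_nsmul _ hu]
    abel

theorem exists_mem_turnIndices_runsInto {r : Pixel} (hr : r ∈ C.covers) :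
    ∃ j ∈ C.turnIndices, C.RunsInto r j := by
  obtain ⟨i, rfl⟩ := hr
  obtain ⟨j, hturn, hrun⟩ := C.exists_runsInto i
  have hk : (0 : ℤ) < C.k := by have := C.two_le; omega
  have hj : ((j % C.k).toNat : ℤ) = j % C.k := Int.toNat_of_nonneg (Int.emod_nonneg j hk.ne')
  refine ⟨(j % C.k).toNat, Finset.mem_filter.2 ⟨Finset.mem_range.2 ?_, ?_⟩, ?_⟩
  · have := Int.emod_lt_of_pos j hk
    omega
  · rwa [hj, C.periodic_turnCost.map_emod]
  · rwa [hj, (C.periodic_runsInto _).map_emod]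

end GridCycle

theorem IsRookPlacement.eq_of_runsInto {P R : Set Pixel} (hR : IsRookPlacement P R)
    (hP : P.Finite) {C : GridCycle} (hC : C.covers ⊆ P) {r r' : Pixel} {j : ℤ}
    (hr : r ∈ R) (hr' : r' ∈ R) (h : C.RunsInto r j) (h' : C.RunsInto r' j) : r = r' := by
  obtain ⟨m, rfl, hm⟩ := h
  obtain ⟨m', rfl, hm'⟩ := h'
  exact hR.eq_of_runs hP (C.step_eq _) (fun u hu => hC (hm u hu)) (fun u hu => hC (hm' u hu)) hr hr'

theorem IsCycleCover.finite {P : Set Pixel} {CC : List GridCycle} (h : IsCycleCover P CC) :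
    P.Finite :=
  (CC.finite_toSet.biUnion fun C _ => C.covers_finite).subset fun p hp => by
    obtain ⟨C, hC, hpC⟩ := h.2 p hp
    exact Set.mem_biUnion hC hpC

theorem List.sum_toFinset_le_sum_map {ι : Type*} [DecidableEq ι] (l : List ι) (f : ι → ℕ) :
    ∑ x ∈ l.toFinset, f x ≤ (l.map f).sum := by
  rw [Finset.sum_list_map_count]
  exact Finset.sum_le_sum fun x hx =>
    Nat.le_mul_of_pos_left _ (List.count_pos_iff.2 (List.mem_toFinset.1 hx))

open Finset in
theorem rookPlacement_le_cycleCover_turns_general (P : Set Pixel)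
    (R : Set Pixel) (hR : IsRookPlacement P R)
    (CC : List GridCycle) (hCC : IsCycleCover P CC) :
    R.ncard ≤ coverTurns CC := by
  classical
  have hP := hCC.finite
  obtain ⟨R, rfl⟩ := (hP.subset hR.1).exists_finset_coe
  rw [Set.ncard_coe_finset]
  calc #R ≤ #(CC.toFinset.sigma GridCycle.turnIndices) := by
        refine card_le_card_of_forall_subsingleton (fun r x => x.1.RunsInto r x.2) ?_ ?_
        · intro r hr
          obtain ⟨C, hC, hrC⟩ := hCC.2 r (hR.1 hr)
          obtain ⟨j, hj, hrun⟩ := C.exists_mem_turnIndices_runsInto hrC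
          exact ⟨⟨C, j⟩, mem_sigma.2 ⟨List.mem_toFinset.2 hC, hj⟩, hrun⟩
        · rintro ⟨C, j⟩ hx r ⟨hr, hrun⟩ r' ⟨hr', hrun'⟩
          exact hR.eq_of_runsInto hP (hCC.1 C (List.mem_toFinset.1 (mem_sigma.1 hx).1)) hr hr'
            hrun hrun'
    _ = ∑ C ∈ CC.toFinset, #C.turnIndices := card_sigma _ _
    _ ≤ ∑ C ∈ CC.toFinset, C.turns := sum_le_sum fun C _ => C.card_turnIndices_le_turns
    _ ≤ coverTurns CC := CC.sum_toFinset_le_sum_map _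

/-- Rook-placement lower bound: for every rook placement `R` in a region `P`,
every cycle cover of `P` (in particular every tour) has at least `|R|` turns. -/
theorem rookPlacement_le_cycleCover_turns (P : Set Pixel) (hP : IsRegion P)
    (R : Set Pixel) (hR : IsRookPlacement P R)
    (CC : List GridCycle) (hCC : IsCycleCover P CC) :
    R.ncard ≤ coverTurns CC :=
  rookPlacement_le_cycleCover_turns_general P R hR CC hCC
end
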